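/- arXiv:2511.05247 — 3 statements merged into one kernel-verified Lean document; each statement's English description precedes it below -/
import Mathlib

section
/- Let w ∈ C[0,1] ∩ H¹(0,1) with w(0) = w(1) = 0, and let 0 < ε < 1/2. Then ∫₀¹ w(t)²/(t(1−t)) dt ≤ 4ε |w|²_{H¹(0,1)} + C log(ε⁻¹) ‖w‖²_{L^∞(0,1)} for an absolute constant C (e.g., C = 4). -/
/-!
Here `d` plays the role of `w'`. With `C = ∫₀¹ d²`, Cauchy–Schwarz on `[0, t]` and on `[t, 1]`
(using `w 0 = w 1 = 0`) gives `w(t)² ≤ min(t, 1 - t) · C ≤ 2 t (1 - t) · C`, so the integrand is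
bounded by `2C` on all of `[0, 1]`. This makes it integrable and bounds the two end pieces
`[0, ε]`, `[1 - ε, 1]` by `2εC` each. On `[ε, 1 - ε]` the integrand is at most
`M² / (t (1 - t)) = M² (1 / t + 1 / (1 - t))`, whose integral is
`2 M² log((1 - ε) / ε) ≤ 2 M² log ε⁻¹`.
-/

open MeasureTheory intervalIntegral Set

lemma sq_intervalIntegral_le_mul {f : ℝ → ℝ} {a b : ℝ} (hab : a ≤ b)
    (hf : IntervalIntegrable f volume a b)
    (hf2 : IntervalIntegrable (fun t => f t ^ 2) volume a b) :
    (∫ t in a..b, f t) ^ 2 ≤ (b - a) * ∫ t in a..b, f t ^ 2 := by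
  rcases hab.eq_or_lt with rfl | hlt
  · simp
  have hL : b - a ≠ 0 := sub_ne_zero.2 hlt.ne'
  have jensen : (⨍ t in a..b, f t) ^ 2 ≤ ⨍ t in a..b, f t ^ 2 :=
    (even_two.convexOn_pow (𝕜 := ℝ)).map_set_average_le (continuousOn_pow 2) isClosed_univ
      (by simpa using hL) (by simp) (by simp) hf.def' hf2.def'
  rw [interval_average_eq, interval_average_eq, smul_eq_mul, smul_eq_mul] at jensen
  calc (∫ t in a..b, f t) ^ 2 = (b - a) ^ 2 * ((b - a)⁻¹ * ∫ t in a..b, f t) ^ 2 := by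
        field_simp
    _ ≤ (b - a) ^ 2 * ((b - a)⁻¹ * ∫ t in a..b, f t ^ 2) := by gcongr
    _ = (b - a) * ∫ t in a..b, f t ^ 2 := by field_simp

lemma sq_intervalIntegral_le_mul_of_subset {f : ℝ → ℝ} {a b c e : ℝ} (hac : a ≤ c)
    (hce : c ≤ e) (heb : e ≤ b) (hf : IntervalIntegrable f volume a b)
    (hf2 : IntervalIntegrable (fun t => f t ^ 2) volume a b) :
    (∫ t in c..e, f t) ^ 2 ≤ (e - c) * ∫ t in a..b, f t ^ 2 := by
  have hsub : uIcc c e ⊆ uIcc a b := by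
    rw [uIcc_of_le hce, uIcc_of_le (hac.trans (hce.trans heb))]
    exact Icc_subset_Icc hac heb
  calc (∫ t in c..e, f t) ^ 2 ≤ (e - c) * ∫ t in c..e, f t ^ 2 :=
        sq_intervalIntegral_le_mul hce (hf.mono_set hsub) (hf2.mono_set hsub)
    _ ≤ (e - c) * ∫ t in a..b, f t ^ 2 := by
        gcongr
        exact integral_mono_interval hac hce heb (.of_forall fun t => sq_nonneg _) hf2

lemma integral_one_div_mul_one_sub {a b : ℝ} (ha : 0 < a) (hb : 0 < b) (ha1 : a < 1)
    (hb1 : b < 1) :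
    ∫ t in a..b, 1 / (t * (1 - t)) = Real.log (b / a) + Real.log ((1 - a) / (1 - b)) := by
  have hne0 : ∀ t ∈ uIcc a b, t ≠ 0 := fun t ht => ((lt_min ha hb).trans_le ht.1).ne'
  have hne1 : ∀ t ∈ uIcc a b, 1 - t ≠ 0 := fun t ht =>
    (sub_pos.2 (ht.2.trans_lt (max_lt ha1 hb1))).ne'
  have hsplit : EqOn (fun t => 1 / (t * (1 - t))) (fun t => 1 / t + 1 / (1 - t)) (uIcc a b) := by
    intro t ht
    field_simp [hne0 t ht, hne1 t ht]
    ring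
  rw [integral_congr hsplit,
    integral_add (intervalIntegrable_one_div hne0 continuousOn_id)
      (intervalIntegrable_one_div hne1 (by fun_prop)),
    integral_one_div fun h => hne0 0 h rfl, integral_comp_sub_left (fun t => 1 / t),
    integral_one_div fun h => (lt_min (sub_pos.2 hb1) (sub_pos.2 ha1)).not_ge h.1]

lemma min_le_two_mul_mul_one_sub {t : ℝ} (ht : t ∈ Icc (0 : ℝ) 1) :
    min t (1 - t) ≤ 2 * (t * (1 - t)) := by
  rcases le_total t (1 / 2) with h | h
  · nlinarith [min_le_left t (1 - t), ht.1]
  · nlinarith [min_le_right t (1 - t), ht.2]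

section

variable {w d : ℝ → ℝ}

lemma sq_le_min_mul_integral_sq {a b t : ℝ} (hd : IntervalIntegrable d volume a b)
    (hd2 : IntervalIntegrable (fun s => d s ^ 2) volume a b)
    (hftc : ∀ t ∈ Icc a b, w t = ∫ s in a..t, d s) (hwb : w b = 0) (ht : t ∈ Icc a b) :
    w t ^ 2 ≤ min (t - a) (b - t) * ∫ s in a..b, d s ^ 2 := by
  have hab : a ≤ b := ht.1.trans ht.2
  have hw_right : w t = -∫ s in t..b, d s := by
    have hsplit := integral_add_adjacent_intervals
      (hd.mono_set (uIcc_subset_uIcc_left (Icc_subset_uIcc ht)))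
      (hd.mono_set (uIcc_subset_uIcc_right (Icc_subset_uIcc ht)))
    rw [← hftc t ht, ← hftc b ⟨hab, le_rfl⟩, hwb] at hsplit
    linarith
  rw [min_mul_of_nonneg _ _ (integral_nonneg hab fun _ _ => sq_nonneg _)]
  refine le_min ?_ ?_
  · rw [hftc t ht]
    exact sq_intervalIntegral_le_mul_of_subset le_rfl ht.1 ht.2 hd hd2
  · rw [hw_right, neg_sq]
    exact sq_intervalIntegral_le_mul_of_subset ht.1 ht.2 le_rfl hd hd2

lemma abs_sq_div_mul_one_sub_le {t : ℝ} (hd : IntervalIntegrable d volume 0 1)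
    (hd2 : IntervalIntegrable (fun s => d s ^ 2) volume 0 1)
    (hftc : ∀ t ∈ Icc (0 : ℝ) 1, w t = ∫ s in (0 : ℝ)..t, d s) (hw1 : w 1 = 0)
    (ht : t ∈ Icc (0 : ℝ) 1) :
    |w t ^ 2 / (t * (1 - t))| ≤ 2 * ∫ s in (0 : ℝ)..1, d s ^ 2 := by
  have hC : 0 ≤ ∫ s in (0 : ℝ)..1, d s ^ 2 :=
    integral_nonneg zero_le_one fun _ _ => sq_nonneg _
  have hden : 0 ≤ t * (1 - t) := mul_nonneg ht.1 (sub_nonneg.2 ht.2)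
  rw [abs_of_nonneg (div_nonneg (sq_nonneg _) hden)]
  rcases hden.eq_or_lt with hden | hden
  · rw [← hden, div_zero]
    positivity
  rw [div_le_iff₀ hden]
  calc w t ^ 2 ≤ min (t - 0) (1 - t) * ∫ s in (0 : ℝ)..1, d s ^ 2 :=
        sq_le_min_mul_integral_sq hd hd2 hftc hw1 ht
    _ ≤ 2 * (t * (1 - t)) * ∫ s in (0 : ℝ)..1, d s ^ 2 := by
        rw [sub_zero]
        gcongr
        exact min_le_two_mul_mul_one_sub ht
    _ = _ := by ring

lemma intervalIntegrable_sq_div_mul_one_sub (hw : ContinuousOn w (Icc 0 1))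
    (hd : IntervalIntegrable d volume 0 1)
    (hd2 : IntervalIntegrable (fun s => d s ^ 2) volume 0 1)
    (hftc : ∀ t ∈ Icc (0 : ℝ) 1, w t = ∫ s in (0 : ℝ)..t, d s) (hw1 : w 1 = 0) :
    IntervalIntegrable (fun t => w t ^ 2 / (t * (1 - t))) volume 0 1 := by
  have hcont : ContinuousOn (fun t => w t ^ 2 / (t * (1 - t))) (Ioo 0 1) :=
    ((hw.mono Ioo_subset_Icc_self).pow 2).div (by fun_prop) fun t ht =>
      (mul_pos ht.1 (sub_pos.2 ht.2)).ne'
  rw [intervalIntegrable_iff_integrableOn_Ioo_of_le zero_le_one]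
  refine ⟨hcont.aestronglyMeasurable measurableSet_Ioo,
    .restrict_of_bounded (C := 2 * ∫ s in (0 : ℝ)..1, d s ^ 2) measure_Ioo_lt_top ?_⟩
  filter_upwards [ae_restrict_mem measurableSet_Ioo] with t ht
  exact abs_sq_div_mul_one_sub_le hd hd2 hftc hw1 (Ioo_subset_Icc_self ht)

lemma integral_sq_div_mul_one_sub_le {a b : ℝ} (hd : IntervalIntegrable d volume 0 1)
    (hd2 : IntervalIntegrable (fun s => d s ^ 2) volume 0 1)
    (hftc : ∀ t ∈ Icc (0 : ℝ) 1, w t = ∫ s in (0 : ℝ)..t, d s) (hw1 : w 1 = 0)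
    (ha : 0 ≤ a) (hab : a ≤ b) (hb : b ≤ 1) :
    ∫ t in a..b, w t ^ 2 / (t * (1 - t)) ≤ 2 * (∫ s in (0 : ℝ)..1, d s ^ 2) * (b - a) := by
  calc ∫ t in a..b, w t ^ 2 / (t * (1 - t))
      ≤ ‖∫ t in a..b, w t ^ 2 / (t * (1 - t))‖ := le_abs_self _
    _ ≤ 2 * (∫ s in (0 : ℝ)..1, d s ^ 2) * |b - a| := by
        refine intervalIntegral.norm_integral_le_of_norm_le_const fun t ht => ?_
        rw [uIoc_of_le hab] at ht
        exact abs_sq_div_mul_one_sub_le hd hd2 hftc hw1 ⟨ha.trans ht.1.le, ht.2.trans hb⟩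
    _ = 2 * (∫ s in (0 : ℝ)..1, d s ^ 2) * (b - a) := by rw [abs_of_nonneg (sub_nonneg.2 hab)]

lemma integral_sq_div_mul_one_sub_le_log {ε M : ℝ} (hε0 : 0 < ε) (hε : ε ≤ 1 / 2)
    (hf : IntervalIntegrable (fun t => w t ^ 2 / (t * (1 - t))) volume ε (1 - ε))
    (hM : ∀ t ∈ Icc ε (1 - ε), |w t| ≤ M) :
    ∫ t in ε..(1 - ε), w t ^ 2 / (t * (1 - t)) ≤ 2 * Real.log ε⁻¹ * M ^ 2 := by
  have hle : ε ≤ 1 - ε := by linarith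
  have hpos : ∀ t ∈ uIcc ε (1 - ε), 0 < t * (1 - t) := fun t ht => by
    rw [uIcc_of_le hle] at ht
    exact mul_pos (hε0.trans_le ht.1) (by linarith [ht.2])
  have hlog : Real.log ((1 - ε) / ε) ≤ Real.log ε⁻¹ := by
    rw [div_eq_mul_inv]
    exact Real.log_le_log (mul_pos (by linarith) (inv_pos.2 hε0))
      (mul_le_of_le_one_left (inv_nonneg.2 hε0.le) (by linarith))
  calc ∫ t in ε..(1 - ε), w t ^ 2 / (t * (1 - t))
      ≤ ∫ t in ε..(1 - ε), M ^ 2 * (1 / (t * (1 - t))) := by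
        refine integral_mono_on hle hf
          ((intervalIntegrable_one_div (fun t ht => (hpos t ht).ne') (by fun_prop)).const_mul _)
          fun t ht => ?_
        rw [mul_one_div]
        exact div_le_div_of_nonneg_right (sq_le_sq.2 ((hM t ht).trans (le_abs_self M)))
          (hpos t (Icc_subset_uIcc ht)).le
    _ = 2 * Real.log ((1 - ε) / ε) * M ^ 2 := by
        rw [intervalIntegral.integral_const_mul,
          integral_one_div_mul_one_sub hε0 (by linarith) (by linarith) (by linarith),
          sub_sub_cancel]
        ring
    _ ≤ 2 * Real.log ε⁻¹ * M ^ 2 := by gcongr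

end

/-- For `w ∈ C[0,1] ∩ H¹(0,1)` with `w(0) = w(1) = 0` and `0 < ε < 1/2`:
`∫₀¹ w(t)²/(t(1-t)) dt ≤ 4ε |w|²_{H¹} + 4 log(ε⁻¹) ‖w‖²_{L^∞}`.
Here `d = w'` and `M` is a bound for `‖w‖_{L^∞(0,1)}`. -/
theorem stmt11 (w d : ℝ → ℝ) (ε M : ℝ) (hε0 : 0 < ε) (hε : ε < 1 / 2)
    (hcont : ContinuousOn w (Set.Icc 0 1))
    (hInt : IntervalIntegrable d volume 0 1)
    (hsq : IntervalIntegrable (fun t => (d t) ^ 2) volume 0 1)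
    (hftc : ∀ t ∈ Set.Icc (0:ℝ) 1, w t = ∫ s in (0:ℝ)..t, d s)
    (hw1 : w 1 = 0)
    (hM : ∀ t ∈ Set.Icc (0:ℝ) 1, |w t| ≤ M) :
    (∫ t in (0:ℝ)..1, (w t) ^ 2 / (t * (1 - t))) ≤
      4 * ε * (∫ t in (0:ℝ)..1, (d t) ^ 2) + 4 * Real.log ε⁻¹ * M ^ 2 := by
  have hf := intervalIntegrable_sq_div_mul_one_sub hcont hInt hsq hftc hw1
  have hf_sub : ∀ {a b : ℝ}, a ∈ Icc (0 : ℝ) 1 → b ∈ Icc (0 : ℝ) 1 →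
      IntervalIntegrable (fun t => w t ^ 2 / (t * (1 - t))) volume a b := fun ha hb =>
    hf.mono_set (uIcc_subset_uIcc (Icc_subset_uIcc ha) (Icc_subset_uIcc hb))
  have h0 : (0 : ℝ) ∈ Icc (0 : ℝ) 1 := left_mem_Icc.2 zero_le_one
  have h1 : (1 : ℝ) ∈ Icc (0 : ℝ) 1 := right_mem_Icc.2 zero_le_one
  have hε_mem : ε ∈ Icc (0 : ℝ) 1 := ⟨hε0.le, by linarith⟩
  have hε_mem' : 1 - ε ∈ Icc (0 : ℝ) 1 := ⟨by linarith, by linarith⟩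
  have hleft := integral_sq_div_mul_one_sub_le hInt hsq hftc hw1 le_rfl hε0.le (by linarith)
  have hright := integral_sq_div_mul_one_sub_le hInt hsq hftc hw1 hε_mem'.1 (by linarith) le_rfl
  have hmid := integral_sq_div_mul_one_sub_le_log hε0 hε.le (hf_sub hε_mem hε_mem')
    fun t ht => hM t ⟨by linarith [ht.1], by linarith [ht.2]⟩
  have hlog : 0 ≤ Real.log ε⁻¹ * M ^ 2 :=
    mul_nonneg (Real.log_nonneg (one_le_inv₀ hε0 |>.2 (by linarith))) (sq_nonneg M)
  rw [← integral_add_adjacent_intervals (hf_sub h0 hε_mem') (hf_sub hε_mem' h1),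
    ← integral_add_adjacent_intervals (hf_sub h0 hε_mem) (hf_sub hε_mem hε_mem')]
  linarith
end

section
/- Let S ∈ ℝ^{n×n} be symmetric positive definite and B ∈ ℝ^{m×n} with B Bᵀ = 2 I_m. Define F := B S^{−1} Bᵀ and M := (1/4) B S Bᵀ. Then for every λ ∈ ℝ^m: λᵀ M^{−1} λ = 4 sup_{w ∈ ℝ^m, w≠0} (wᵀ Bᵀ λ)² / ‖Bᵀ B w‖²_S ≤ sup_{v ∈ ℝⁿ, v≠0} (vᵀ Bᵀ λ)² / ‖v‖²_S = λᵀ B S^{−1} Bᵀ λ = λᵀ F λ, i.e., M^{−1} ≤ F in the Loewner order. -/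
open Matrix

/-- `‖v‖²_S`. -/
noncomputable def Snorm2 {n : ℕ} (S : Matrix (Fin n) (Fin n) ℝ) (v : Fin n → ℝ) : ℝ :=
  v ⬝ᵥ S.mulVec v

/-!
For `A` positive definite, Cauchy–Schwarz for `⟪x, y⟫ = xᵀ A y` gives
`(vᵀu)² ≤ (vᵀAv)(uᵀA⁻¹u)`, with equality at `v = A⁻¹u`; hence
`sup_{v ≠ 0} (vᵀu)² / vᵀAv = uᵀA⁻¹u`, and the supremum may equally be taken over `v = Lw` for any
surjective `L`. With `A = S`, `u = Bᵀλ` this is `λᵀFλ`. With `A = BSBᵀ` and `L = B`, which is onto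
because `BBᵀ = 2I`, it gives `λᵀM⁻¹λ = 4 λᵀ(BSBᵀ)⁻¹λ = 4 sup_w`. Finally
`(BᵀBw)ᵀBᵀλ = 2 wᵀBᵀλ`, so four times each term of the supremum over `w` is the term of the
supremum over `ℝⁿ` at `v = BᵀBw`.
-/

namespace Matrix

variable {ι κ : Type*} [Fintype ι] [Fintype κ]

theorem dotProduct_mul_mul_transpose_mulVec (B : Matrix ι κ ℝ) (T : Matrix κ κ ℝ) (x : ι → ℝ) :
    x ⬝ᵥ (B * T * Bᵀ) *ᵥ x = (Bᵀ *ᵥ x) ⬝ᵥ T *ᵥ (Bᵀ *ᵥ x) := by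
  rw [Matrix.mul_assoc, ← mulVec_mulVec, ← mulVec_mulVec, dotProduct_mulVec, ← mulVec_transpose]

theorem PosSemidef.sq_dotProduct_mulVec_le {A : Matrix ι ι ℝ} (hA : A.PosSemidef) (x y : ι → ℝ) :
    (x ⬝ᵥ A *ᵥ y) ^ 2 ≤ (x ⬝ᵥ A *ᵥ x) * (y ⬝ᵥ A *ᵥ y) := by
  have hT : Aᵀ = A := (conjTranspose_eq_transpose_of_trivial A).symm.trans hA.isHermitian.eq
  have hsymm : y ⬝ᵥ A *ᵥ x = x ⬝ᵥ A *ᵥ y := by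
    nth_rw 1 [← hT]
    exact dotProduct_transpose_mulVec A y x
  have hquad : ∀ t : ℝ,
      0 ≤ (y ⬝ᵥ A *ᵥ y) * (t * t) + 2 * (x ⬝ᵥ A *ᵥ y) * t + x ⬝ᵥ A *ᵥ x := by
    intro t
    have h := hA.dotProduct_mulVec_nonneg (x + t • y)
    simp only [star_trivial, mulVec_add, mulVec_smul, dotProduct_add, add_dotProduct,
      dotProduct_smul, smul_dotProduct, smul_eq_mul, hsymm] at h
    linarith
  have hdisc := discrim_le_zero hquad
  rw [discrim] at hdisc
  nlinarith

variable [DecidableEq ι]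

theorem PosDef.mulVec_inv_mulVec {A : Matrix ι ι ℝ} (hA : A.PosDef) (u : ι → ℝ) :
    A *ᵥ (A⁻¹ *ᵥ u) = u := by
  rw [mulVec_mulVec, mul_nonsing_inv _ ((isUnit_iff_isUnit_det A).mp hA.isUnit), one_mulVec]

theorem PosDef.sq_dotProduct_div_le {A : Matrix ι ι ℝ} (hA : A.PosDef) (u v : ι → ℝ) :
    (v ⬝ᵥ u) ^ 2 / (v ⬝ᵥ A *ᵥ v) ≤ u ⬝ᵥ A⁻¹ *ᵥ u := by
  set y := A⁻¹ *ᵥ u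
  have hy : A *ᵥ y = u := hA.mulVec_inv_mulVec u
  have hyAy : y ⬝ᵥ A *ᵥ y = u ⬝ᵥ y := by rw [hy, dotProduct_comm]
  refine div_le_of_le_mul₀ ?_ ?_ ?_
  · simpa using hA.posSemidef.dotProduct_mulVec_nonneg v
  · simpa using hA.inv.posSemidef.dotProduct_mulVec_nonneg u
  · calc (v ⬝ᵥ u) ^ 2 = (v ⬝ᵥ A *ᵥ y) ^ 2 := by rw [hy]
      _ ≤ (v ⬝ᵥ A *ᵥ v) * (y ⬝ᵥ A *ᵥ y) := hA.posSemidef.sq_dotProduct_mulVec_le v y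
      _ = (u ⬝ᵥ y) * (v ⬝ᵥ A *ᵥ v) := by rw [hyAy, mul_comm]

theorem PosDef.sq_dotProduct_div_inv_mulVec {A : Matrix ι ι ℝ} (hA : A.PosDef) (u : ι → ℝ) :
    ((A⁻¹ *ᵥ u) ⬝ᵥ u) ^ 2 / ((A⁻¹ *ᵥ u) ⬝ᵥ A *ᵥ (A⁻¹ *ᵥ u)) = u ⬝ᵥ A⁻¹ *ᵥ u := by
  rw [hA.mulVec_inv_mulVec, dotProduct_comm _ u, sq, mul_self_div_self]

theorem PosDef.iSup_sq_dotProduct_div_comp [DecidableEq κ] {A : Matrix ι ι ℝ} (hA : A.PosDef)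
    {L : Matrix ι κ ℝ} (hL : Function.Surjective L.mulVec) (u : ι → ℝ) :
    ⨆ w : {w : κ → ℝ // w ≠ 0}, ((L *ᵥ w.1) ⬝ᵥ u) ^ 2 / ((L *ᵥ w.1) ⬝ᵥ A *ᵥ (L *ᵥ w.1)) =
      u ⬝ᵥ A⁻¹ *ᵥ u := by
  have hle : ∀ w : {w : κ → ℝ // w ≠ 0},
      ((L *ᵥ w.1) ⬝ᵥ u) ^ 2 / ((L *ᵥ w.1) ⬝ᵥ A *ᵥ (L *ᵥ w.1)) ≤ u ⬝ᵥ A⁻¹ *ᵥ u :=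
    fun w => hA.sq_dotProduct_div_le u _
  have hnonneg : 0 ≤ u ⬝ᵥ A⁻¹ *ᵥ u := by simpa using hA.inv.posSemidef.dotProduct_mulVec_nonneg u
  refine le_antisymm (Real.iSup_le hle hnonneg) ?_
  rcases eq_or_ne u 0 with rfl | hu
  · simp
  obtain ⟨w, hw⟩ := hL (A⁻¹ *ᵥ u)
  have hw0 : w ≠ 0 := by
    rintro rfl
    have hpos := hA.inv.dotProduct_mulVec_pos hu
    rw [← hw, mulVec_zero, dotProduct_zero] at hpos
    exact hpos.false
  refine le_ciSup_of_le ⟨_, Set.forall_mem_range.2 hle⟩ ⟨w, hw0⟩ ?_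
  rw [hw, hA.sq_dotProduct_div_inv_mulVec]

theorem PosDef.iSup_sq_dotProduct_div {A : Matrix ι ι ℝ} (hA : A.PosDef) (u : ι → ℝ) :
    ⨆ v : {v : ι → ℝ // v ≠ 0}, (v.1 ⬝ᵥ u) ^ 2 / (v.1 ⬝ᵥ A *ᵥ v.1) = u ⬝ᵥ A⁻¹ *ᵥ u := by
  simpa using hA.iSup_sq_dotProduct_div_comp (L := 1) (fun v => ⟨v, one_mulVec v⟩) u

theorem PosDef.mul_mul_transpose_of_mul_eq_one {S : Matrix κ κ ℝ} (hS : S.PosDef)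
    {B : Matrix ι κ ℝ} {C : Matrix κ ι ℝ} (hBC : B * C = 1) :
    (B * S * Bᵀ).PosDef := by
  have hinj : Function.Injective B.vecMul := fun x y hxy => by
    simpa [vecMul_vecMul, hBC] using congrArg (· ᵥ* C) hxy
  simpa [conjTranspose_eq_transpose_of_trivial] using hS.mul_mul_conjTranspose_same hinj

end Matrix

theorem mul_inv_two_smul_transpose {m n : Type*} [Fintype n] [DecidableEq m] {B : Matrix m n ℝ}
    (hB : B * Bᵀ = (2 : ℝ) • 1) : B * ((2 : ℝ)⁻¹ • Bᵀ) = 1 := by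
  rw [Matrix.mul_smul, hB, smul_smul]
  norm_num

section

variable {m n : Type*} [Fintype m] [Fintype n] [DecidableEq m] [DecidableEq n]
  {S : Matrix n n ℝ} {B : Matrix m n ℝ}

theorem dotProduct_inv_smul_mulVec_eq_iSup (hS : S.PosDef) (hB : B * Bᵀ = (2 : ℝ) • 1)
    (lam : m → ℝ) :
    lam ⬝ᵥ (((1 : ℝ) / 4) • (B * S * Bᵀ))⁻¹ *ᵥ lam =
      4 * ⨆ w : {w : n → ℝ // w ≠ 0},
        (w.1 ⬝ᵥ Bᵀ *ᵥ lam) ^ 2 / ((Bᵀ * B) *ᵥ w.1 ⬝ᵥ S *ᵥ ((Bᵀ * B) *ᵥ w.1)) := by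
  have hBC := mul_inv_two_smul_transpose hB
  have hA := hS.mul_mul_transpose_of_mul_eq_one hBC
  have hinv : (((1 : ℝ) / 4) • (B * S * Bᵀ))⁻¹ = (4 : ℝ) • (B * S * Bᵀ)⁻¹ := by
    refine inv_eq_right_inv ?_
    rw [smul_mul_smul_comm, mul_nonsing_inv _ ((isUnit_iff_isUnit_det _).mp hA.isUnit)]
    norm_num
  have hsurj : Function.Surjective B.mulVec :=
    mulVec_surjective_iff_exists_right_inverse.mpr ⟨_, hBC⟩
  rw [hinv, smul_mulVec, dotProduct_smul, smul_eq_mul,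
    ← hA.iSup_sq_dotProduct_div_comp hsurj]
  congr 1
  refine iSup_congr fun w => ?_
  rw [dotProduct_mul_mul_transpose_mulVec, mulVec_mulVec, dotProduct_transpose_mulVec,
    dotProduct_comm (B *ᵥ w.1)]

theorem four_mul_iSup_le_iSup (hS : S.PosDef) (hB : B * Bᵀ = (2 : ℝ) • 1) (lam : m → ℝ) :
    4 * (⨆ w : {w : n → ℝ // w ≠ 0},
        (w.1 ⬝ᵥ Bᵀ *ᵥ lam) ^ 2 / ((Bᵀ * B) *ᵥ w.1 ⬝ᵥ S *ᵥ ((Bᵀ * B) *ᵥ w.1))) ≤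
      ⨆ v : {v : n → ℝ // v ≠ 0}, (v.1 ⬝ᵥ Bᵀ *ᵥ lam) ^ 2 / (v.1 ⬝ᵥ S *ᵥ v.1) := by
  rw [Real.mul_iSup_of_nonneg (by norm_num), hS.iSup_sq_dotProduct_div]
  refine Real.iSup_le (fun w => ?_) ?_
  · have hnum : (Bᵀ * B) *ᵥ w.1 ⬝ᵥ Bᵀ *ᵥ lam = 2 * (w.1 ⬝ᵥ Bᵀ *ᵥ lam) := by
      rw [dotProduct_transpose_mulVec, dotProduct_transpose_mulVec, ← mulVec_mulVec,
        mulVec_mulVec (M := B), hB, smul_mulVec, one_mulVec, dotProduct_smul, smul_eq_mul]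
    calc 4 * ((w.1 ⬝ᵥ Bᵀ *ᵥ lam) ^ 2 / ((Bᵀ * B) *ᵥ w.1 ⬝ᵥ S *ᵥ ((Bᵀ * B) *ᵥ w.1)))
        = ((Bᵀ * B) *ᵥ w.1 ⬝ᵥ Bᵀ *ᵥ lam) ^ 2 / ((Bᵀ * B) *ᵥ w.1 ⬝ᵥ S *ᵥ ((Bᵀ * B) *ᵥ w.1)) := by
          rw [hnum]; ring
      _ ≤ _ := hS.sq_dotProduct_div_le _ _
  · simpa using hS.inv.posSemidef.dotProduct_mulVec_nonneg (Bᵀ *ᵥ lam)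

end

/-- With `S` SPD, `B Bᵀ = 2I`, `F := B S⁻¹ Bᵀ` and `M := (1/4) B S Bᵀ`, one has for
every `λ`:
`λᵀ M⁻¹ λ = 4 sup_{w≠0} (wᵀBᵀλ)²/‖BᵀBw‖²_S ≤ sup_{v≠0} (vᵀBᵀλ)²/‖v‖²_S = λᵀ F λ`,
i.e. `M⁻¹ ≤ F` in the Loewner order. -/
theorem stmt13 (m n : ℕ) (S : Matrix (Fin n) (Fin n) ℝ) (hS : S.PosDef)
    (B : Matrix (Fin m) (Fin n) ℝ) (hB : B * B.transpose = (2 : ℝ) • 1) :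
    (∀ lam : Fin m → ℝ,
      lam ⬝ᵥ ((((1:ℝ)/4) • (B * S * B.transpose))⁻¹).mulVec lam =
        4 * (⨆ w : {w : Fin n → ℝ // w ≠ 0},
          (w.1 ⬝ᵥ B.transpose.mulVec lam) ^ 2 /
            Snorm2 S ((B.transpose * B).mulVec w.1)) ∧
      4 * (⨆ w : {w : Fin n → ℝ // w ≠ 0},
          (w.1 ⬝ᵥ B.transpose.mulVec lam) ^ 2 /
            Snorm2 S ((B.transpose * B).mulVec w.1)) ≤
        (⨆ v : {v : Fin n → ℝ // v ≠ 0},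
          (v.1 ⬝ᵥ B.transpose.mulVec lam) ^ 2 / Snorm2 S v.1) ∧
      (⨆ v : {v : Fin n → ℝ // v ≠ 0},
          (v.1 ⬝ᵥ B.transpose.mulVec lam) ^ 2 / Snorm2 S v.1) =
        lam ⬝ᵥ (B * S⁻¹ * B.transpose).mulVec lam) ∧
    ((B * S⁻¹ * B.transpose) - (((1:ℝ)/4) • (B * S * B.transpose))⁻¹).PosSemidef := by
  have rayleigh : ∀ lam : Fin m → ℝ, _ ∧ _ ∧ _ := fun lam =>
    ⟨dotProduct_inv_smul_mulVec_eq_iSup hS hB lam, four_mul_iSup_le_iSup hS hB lam,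
      (hS.iSup_sq_dotProduct_div _).trans (dotProduct_mul_mul_transpose_mulVec B S⁻¹ lam).symm⟩
  refine ⟨rayleigh, ?_⟩
  have hF : (B * S⁻¹ * Bᵀ).IsHermitian := by
    simpa [conjTranspose_eq_transpose_of_trivial] using
      (hS.inv.posSemidef.mul_mul_conjTranspose_same B).isHermitian
  have hM : ((((1 : ℝ) / 4) • (B * S * Bᵀ))⁻¹).IsHermitian :=
    ((hS.mul_mul_transpose_of_mul_eq_one (mul_inv_two_smul_transpose hB)).smul
      (by norm_num : (0 : ℝ) < 1 / 4)).inv.isHermitian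
  refine .of_dotProduct_mulVec_nonneg (hF.sub hM) fun x => ?_
  obtain ⟨h1, h2, h3⟩ := rayleigh x
  simpa [sub_mulVec, dotProduct_sub] using h1.trans_le (h2.trans h3.le)
end

section
/- Let G : [0,1] → ℝ², G(t) parameterizing a curve Γ, be C² with ‖G'‖_∞ ≤ C H, ‖G''‖_∞ ≤ C H, and satisfy the lower bound |G(s)−G(t)| ≥ c H |s−t| for all s,t. Let v : Γ → ℝ be Lipschitz and let v̂(t) := v(G(t)) w(t) where w(t) is a C¹ weight with ‖w‖_∞ ≤ CH, ‖w'‖_∞ ≤ CH. Then the Sobolev–Slobodeckij seminorm satisfies |v̂|²_{H^{1/2}(0,1)} ≤ C' ( H² |v|²_{H^{1/2}(Γ)} + H ‖v‖²_{L²(Γ)} ), where |v|²_{H^{1/2}(Γ)} = ∫_Γ∫_Γ (v(x)−v(y))²/|x−y|² dx dy and C' depends only on C, c. -/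
open MeasureTheory intervalIntegral

open Set Filter in
private lemma keyalg16 (C c H d A B u wt N Ds Dt : ℝ) (hC : 0 < C) (hc : 0 < c) (hH : 0 < H)
    (hd : 0 < d) (hu : |u| ≤ C*H*d) (hwt : |wt| ≤ C*H) (hN1 : c*H*d ≤ N) (hN2 : N ≤ C*H*d)
    (hDs : c*H ≤ Ds) (hDt : c*H ≤ Dt) :
    (A*u + B*wt)^2/d^2 ≤ 2*C^2*H^2*A^2 + 2*C^4/c^2*H^2*(B^2/N^2*(Ds*Dt)) := by
  have hN0 : 0 < N := lt_of_lt_of_le (by positivity) hN1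
  have hd2 : 0 < d^2 := by positivity
  have hq : 0 < N^2 := by positivity
  have hN2' : N^2 ≤ C^2*H^2*d^2 := by nlinarith
  have step2 : u^2 ≤ C^2*H^2*d^2 := by nlinarith [sq_abs u, abs_nonneg u]
  have step3 : wt^2 ≤ C^2*H^2 := by nlinarith [sq_abs wt, abs_nonneg wt]
  have e1 : (A*u + B*wt)^2/d^2 ≤ (2*A^2*(C^2*H^2*d^2) + 2*B^2*(C^2*H^2))/d^2 := by
    gcongr
    nlinarith [sq_nonneg (A*u - B*wt), sq_nonneg A, sq_nonneg B]
  have e2 : (2*A^2*(C^2*H^2*d^2) + 2*B^2*(C^2*H^2))/d^2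
      = 2*C^2*H^2*A^2 + 2*C^2*H^2*(B^2/d^2) := by field_simp
  have e3 : B^2/d^2 ≤ (C^2*H^2*B^2)/N^2 := by
    rw [div_le_div_iff₀ hd2 hq]; nlinarith [sq_nonneg B]
  have hR : 0 ≤ B^2/N^2 := by positivity
  have hprod : c^2*H^2 ≤ Ds*Dt := by
    have h1 : (c*H)*(c*H) ≤ Ds*Dt :=
      mul_le_mul hDs hDt (by positivity) (le_trans (by positivity) hDs)
    calc c^2*H^2 = (c*H)*(c*H) := by ring
      _ ≤ Ds*Dt := h1
  have e4 : 2*C^2*H^2*((C^2*H^2*B^2)/N^2) ≤ 2*C^4/c^2*H^2*(B^2/N^2*(Ds*Dt)) := by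
    have key : 2*C^4/c^2*H^2*(B^2/N^2*(Ds*Dt)) - 2*C^2*H^2*((C^2*H^2*B^2)/N^2)
        = 2*C^4*H^2/c^2*(B^2/N^2)*(Ds*Dt - c^2*H^2) := by field_simp
    have h0 : 0 ≤ 2*C^4*H^2/c^2*(B^2/N^2)*(Ds*Dt - c^2*H^2) :=
      mul_nonneg (mul_nonneg (by positivity) hR) (sub_nonneg.mpr hprod)
    linarith [key]
  calc (A*u + B*wt)^2/d^2 ≤ (2*A^2*(C^2*H^2*d^2) + 2*B^2*(C^2*H^2))/d^2 := e1
    _ = 2*C^2*H^2*A^2 + 2*C^2*H^2*(B^2/d^2) := e2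
    _ ≤ 2*C^2*H^2*A^2 + 2*C^2*H^2*((C^2*H^2*B^2)/N^2) := by
        have := mul_le_mul_of_nonneg_left e3 (by positivity : (0:ℝ) ≤ 2*C^2*H^2)
        linarith
    _ ≤ 2*C^2*H^2*A^2 + 2*C^4/c^2*H^2*(B^2/N^2*(Ds*Dt)) := by linarith

private lemma final16 (C c H kk IA J1 J2 : ℝ) (hC : 0 < C) (hc : 0 < c) (hH : 0 < H)
    (hkk : kk = 2*C^4/c^2) (hJ1 : 0 ≤ J1) (hJ2 : 0 ≤ J2) (hIA : 0 ≤ IA)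
    (hCi : c*H*IA ≤ J2) :
    2*C^2*H^2*IA + kk*H^2*J1 ≤ (kk + 2*C^2/c + 1) * (H^2*J1 + H*J2) := by
  subst hkk
  have t1 : 2*C^2*H^2*IA ≤ 2*C^2/c*(H*J2) := by
    have h := mul_le_mul_of_nonneg_left hCi (by positivity : (0:ℝ) ≤ 2*C^2/c*H)
    calc 2*C^2*H^2*IA = 2*C^2/c*H*(c*H*IA) := by field_simp
      _ ≤ 2*C^2/c*H*J2 := h
      _ = 2*C^2/c*(H*J2) := by ring
  have hX : 0 ≤ H^2*J1 := mul_nonneg (sq_nonneg H) hJ1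
  have hY : 0 ≤ H*J2 := mul_nonneg hH.le hJ2
  have hk0 : (0:ℝ) < 2*C^4/c^2 := by positivity
  have hCc : (0:ℝ) < 2*C^2/c := by positivity
  nlinarith [t1, hX, hY, mul_nonneg hk0.le hY, mul_nonneg hCc.le hX]

/-- Scalar model of the trace-seminorm transformation rule on a curve `Γ = G([0,1])`:
for `v̂(t) = v(G(t)) w(t)`,
`|v̂|²_{H^{1/2}(0,1)} ≤ C' ( H² |v|²_{H^{1/2}(Γ)} + H ‖v‖²_{L²(Γ)} )`,
with the curve seminorms written in arclength parameterization. -/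
theorem stmt16 (C c : ℝ) (hC : 0 < C) (hc : 0 < c) :
    ∃ C' > (0:ℝ), ∀ (G : ℝ → ℝ × ℝ) (H : ℝ) (v : ℝ × ℝ → ℝ) (w : ℝ → ℝ) (K : NNReal),
      0 < H →
      ContDiffOn ℝ 2 G (Set.Icc 0 1) →
      (∀ t ∈ Set.Icc (0:ℝ) 1, ‖deriv G t‖ ≤ C * H) →
      (∀ t ∈ Set.Icc (0:ℝ) 1, ‖deriv (deriv G) t‖ ≤ C * H) →
      (∀ s ∈ Set.Icc (0:ℝ) 1, ∀ t ∈ Set.Icc (0:ℝ) 1,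
        c * H * |s - t| ≤ ‖G s - G t‖) →
      LipschitzOnWith K v (G '' Set.Icc 0 1) →
      ContDiffOn ℝ 1 w (Set.Icc 0 1) →
      (∀ t ∈ Set.Icc (0:ℝ) 1, |w t| ≤ C * H) →
      (∀ t ∈ Set.Icc (0:ℝ) 1, |deriv w t| ≤ C * H) →
      (∫ s in (0:ℝ)..1, ∫ t in (0:ℝ)..1,
          (v (G s) * w s - v (G t) * w t) ^ 2 / (s - t) ^ 2) ≤
        C' * (H ^ 2 * (∫ s in (0:ℝ)..1, ∫ t in (0:ℝ)..1,
                (v (G s) - v (G t)) ^ 2 / ‖G s - G t‖ ^ 2 *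
                  (‖deriv G s‖ * ‖deriv G t‖))
              + H * ∫ t in (0:ℝ)..1, (v (G t)) ^ 2 * ‖deriv G t‖) := by
  classical
  refine ⟨2*C^4/c^2 + 2*C^2/c + 1, by positivity, ?_⟩
  intro G H v w K hH hG2 hG' hG'' hlow hv hw1 hwb hw'b
  set κ : ℝ := 2*C^4/c^2 with hκ
  have h01 : (0:ℝ) ≤ 1 := by norm_num
  have hUD : UniqueDiffOn ℝ (Set.Icc (0:ℝ) 1) := uniqueDiffOn_Icc (by norm_num)
  have hIooIcc : Set.Ioo (0:ℝ) 1 ⊆ Set.Icc 0 1 := Set.Ioo_subset_Icc_self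
  have hIocIcc : Set.Ioc (0:ℝ) 1 ⊆ Set.Icc 0 1 := Set.Ioc_subset_Icc_self
  have hGC : ContinuousOn G (Set.Icc 0 1) := hG2.continuousOn
  have hGd : DifferentiableOn ℝ G (Set.Icc 0 1) := hG2.differentiableOn (by norm_num)
  have hdwG_cont : ContinuousOn (derivWithin G (Set.Icc 0 1)) (Set.Icc 0 1) :=
    hG2.continuousOn_derivWithin hUD (by norm_num)
  have hdwG_eq : ∀ t ∈ Set.Ioo (0:ℝ) 1, derivWithin G (Set.Icc 0 1) t = deriv G t :=
    fun t ht => derivWithin_of_mem_nhds (Icc_mem_nhds ht.1 ht.2)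
  have hdwG_bd : ∀ t ∈ Set.Icc (0:ℝ) 1, ‖derivWithin G (Set.Icc 0 1) t‖ ≤ C * H := by
    intro t ht
    have hcl : t ∈ closure (Set.Ioo (0:ℝ) 1) := by
      rw [closure_Ioo (by norm_num : (0:ℝ) ≠ 1)]; exact ht
    have hne : (nhdsWithin t (Set.Ioo (0:ℝ) 1)).NeBot := mem_closure_iff_nhdsWithin_neBot.mp hcl
    have htend : Filter.Tendsto (fun s => ‖derivWithin G (Set.Icc (0:ℝ) 1) s‖)
        (nhdsWithin t (Set.Ioo (0:ℝ) 1)) (nhds ‖derivWithin G (Set.Icc (0:ℝ) 1) t‖) :=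
      ((hdwG_cont t ht).mono hIooIcc).norm.tendsto
    refine le_of_tendsto htend (Filter.eventually_of_mem self_mem_nhdsWithin (fun s hs => ?_))
    rw [hdwG_eq s hs]; exact hG' s (hIooIcc hs)
  have hGlip : ∀ s ∈ Set.Icc (0:ℝ) 1, ∀ t ∈ Set.Icc (0:ℝ) 1,
      ‖G s - G t‖ ≤ C * H * |s - t| := by
    intro s hs t ht
    have := (convex_Icc (0:ℝ) 1).norm_image_sub_le_of_norm_derivWithin_le hGd hdwG_bd ht hs
    simpa [Real.norm_eq_abs] using this
  have hderiv_lb : ∀ t ∈ Set.Ioo (0:ℝ) 1, c * H ≤ ‖deriv G t‖ := by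
    intro t ht
    have hdiff : DifferentiableAt ℝ G t :=
      (hGd t (hIooIcc ht)).differentiableAt (Icc_mem_nhds ht.1 ht.2)
    have hslope := hasDerivAt_iff_tendsto_slope.mp hdiff.hasDerivAt
    have hsub : Set.Ioo t 1 ⊆ {t}ᶜ := fun x hx => ne_of_gt hx.1
    have hcl : t ∈ closure (Set.Ioo t 1) := by
      rw [closure_Ioo (ne_of_lt ht.2)]; exact ⟨le_refl t, le_of_lt ht.2⟩
    have hne : (nhdsWithin t (Set.Ioo t 1)).NeBot := mem_closure_iff_nhdsWithin_neBot.mp hcl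
    have htend : Filter.Tendsto (fun s => ‖slope G t s‖) (nhdsWithin t (Set.Ioo t 1))
        (nhds ‖deriv G t‖) := (hslope.norm).mono_left (nhdsWithin_mono t hsub)
    refine ge_of_tendsto htend (Filter.eventually_of_mem self_mem_nhdsWithin (fun s hs => ?_))
    have hs1 : s ∈ Set.Icc (0:ℝ) 1 := ⟨le_of_lt (lt_trans ht.1 hs.1), le_of_lt hs.2⟩
    have hst : s ≠ t := ne_of_gt hs.1
    have habs : (0:ℝ) < |s - t| := abs_pos.mpr (sub_ne_zero.mpr hst)
    have hlow' := hlow s hs1 t (hIooIcc ht)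
    rw [slope_def_module, norm_smul, norm_inv, Real.norm_eq_abs]
    rw [← div_eq_inv_mul, le_div_iff₀ habs]
    linarith
  -- w facts
  have hwc : ContinuousOn w (Set.Icc 0 1) := hw1.continuousOn
  have hwd : DifferentiableOn ℝ w (Set.Icc 0 1) := hw1.differentiableOn (by norm_num)
  have hdww_cont : ContinuousOn (derivWithin w (Set.Icc 0 1)) (Set.Icc 0 1) :=
    hw1.continuousOn_derivWithin hUD (by norm_num)
  have hdww_eq : ∀ t ∈ Set.Ioo (0:ℝ) 1, derivWithin w (Set.Icc 0 1) t = deriv w t :=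
    fun t ht => derivWithin_of_mem_nhds (Icc_mem_nhds ht.1 ht.2)
  have hdww_bd : ∀ t ∈ Set.Icc (0:ℝ) 1, ‖derivWithin w (Set.Icc 0 1) t‖ ≤ C * H := by
    intro t ht
    have hcl : t ∈ closure (Set.Ioo (0:ℝ) 1) := by
      rw [closure_Ioo (by norm_num : (0:ℝ) ≠ 1)]; exact ht
    have hne : (nhdsWithin t (Set.Ioo (0:ℝ) 1)).NeBot := mem_closure_iff_nhdsWithin_neBot.mp hcl
    have htend : Filter.Tendsto (fun s => ‖derivWithin w (Set.Icc (0:ℝ) 1) s‖)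
        (nhdsWithin t (Set.Ioo (0:ℝ) 1)) (nhds ‖derivWithin w (Set.Icc (0:ℝ) 1) t‖) :=
      ((hdww_cont t ht).mono hIooIcc).norm.tendsto
    refine le_of_tendsto htend (Filter.eventually_of_mem self_mem_nhdsWithin (fun s hs => ?_))
    rw [hdww_eq s hs]
    rw [Real.norm_eq_abs]
    exact hw'b s (hIooIcc hs)
  have hwlip : ∀ s ∈ Set.Icc (0:ℝ) 1, ∀ t ∈ Set.Icc (0:ℝ) 1,
      |w s - w t| ≤ C * H * |s - t| := by
    intro s hs t ht
    have := (convex_Icc (0:ℝ) 1).norm_image_sub_le_of_norm_derivWithin_le hwd hdww_bd ht hs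
    simpa [Real.norm_eq_abs] using this
  -- v ∘ G facts
  have halip : ∀ s ∈ Set.Icc (0:ℝ) 1, ∀ t ∈ Set.Icc (0:ℝ) 1,
      |v (G s) - v (G t)| ≤ (K:ℝ) * ‖G s - G t‖ := by
    intro s hs t ht
    have := hv.dist_le_mul (G s) (Set.mem_image_of_mem G hs) (G t) (Set.mem_image_of_mem G ht)
    rwa [Real.dist_eq, dist_eq_norm] at this
  have haC : ContinuousOn (fun t => v (G t)) (Set.Icc 0 1) :=
    hv.continuousOn.comp hGC (Set.mapsTo_image G _)
  obtain ⟨M, hM⟩ : ∃ M, ∀ t ∈ Set.Icc (0:ℝ) 1, ‖v (G t)‖ ≤ M :=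
    isCompact_Icc.exists_bound_of_continuousOn haC
  -- key pointwise inequality
  have hkey : ∀ s ∈ Set.Ioo (0:ℝ) 1, ∀ t ∈ Set.Ioo (0:ℝ) 1,
      (v (G s) * w s - v (G t) * w t) ^ 2 / (s - t) ^ 2 ≤
        2*C^2*H^2*(v (G s))^2 + κ*H^2*((v (G s) - v (G t)) ^ 2 / ‖G s - G t‖ ^ 2 *
          (‖deriv G s‖ * ‖deriv G t‖)) := by
    intro s hs t ht
    by_cases hst : s = t
    · subst hst
      simp only [sub_self]
      rw [zero_pow (two_ne_zero), zero_div]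
      positivity
    · have hd : (0:ℝ) < |s - t| := abs_pos.mpr (sub_ne_zero.mpr hst)
      have hnum : v (G s) * w s - v (G t) * w t
          = v (G s) * (w s - w t) + (v (G s) - v (G t)) * (w t) := by ring
      have hden : (s - t)^2 = |s - t|^2 := (sq_abs _).symm
      rw [hnum, hden]
      exact keyalg16 C c H (|s - t|) (v (G s)) (v (G s) - v (G t)) (w s - w t) (w t)
        (‖G s - G t‖) (‖deriv G s‖) (‖deriv G t‖) hC hc hH hd
        (hwlip s (hIooIcc hs) t (hIooIcc ht)) (hwb t (hIooIcc ht))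
        (hlow s (hIooIcc hs) t (hIooIcc ht)) (hGlip s (hIooIcc hs) t (hIooIcc ht))
        (hderiv_lb s hs) (hderiv_lb t ht)
  -- measure setup
  set μ : Measure ℝ := volume.restrict (Set.Ioc (0:ℝ) 1) with hμ
  haveI : IsFiniteMeasure μ := by
    constructor
    rw [hμ, Measure.restrict_apply_univ, Real.volume_Ioc]
    norm_num
  have hae_Ioo : ∀ᵐ t ∂μ, t ∈ Set.Ioo (0:ℝ) 1 := by
    have h1 : ∀ᵐ t ∂μ, t ∈ Set.Ioc (0:ℝ) 1 := ae_restrict_mem measurableSet_Ioc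
    have h2 : μ {(1:ℝ)} = 0 := by
      rw [hμ, Measure.restrict_apply (measurableSet_singleton _)]
      exact measure_mono_null Set.inter_subset_left Real.volume_singleton
    have h2' : ∀ᵐ t ∂μ, t ≠ (1:ℝ) := by
      rw [ae_iff]
      simpa [Set.setOf_eq_eq_singleton] using h2
    filter_upwards [h1, h2'] with t ht1 ht2
    exact ⟨ht1.1, lt_of_le_of_ne ht1.2 ht2⟩
  have hmA : AEStronglyMeasurable (fun t => v (G t)) μ :=
    (haC.mono hIocIcc).aestronglyMeasurable measurableSet_Ioc
  have hmD : Measurable fun t => ‖deriv G t‖ := (measurable_deriv G).norm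
  -- uniform bound for the f1 integrand
  have hbnd : ∀ s ∈ Set.Icc (0:ℝ) 1, ∀ t ∈ Set.Icc (0:ℝ) 1,
      ‖(v (G s) - v (G t)) ^ 2 / ‖G s - G t‖ ^ 2 * (‖deriv G s‖ * ‖deriv G t‖)‖
        ≤ (K:ℝ)^2 * ((C*H)*(C*H)) := by
    intro s hs t ht
    have hq : (v (G s) - v (G t)) ^ 2 / ‖G s - G t‖ ^ 2 ≤ (K:ℝ)^2 := by
      by_cases hz : ‖G s - G t‖ = 0
      · have h0 : |v (G s) - v (G t)| ≤ 0 := by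
          have := halip s hs t ht; rw [hz] at this; simpa using this
        have h0' : v (G s) - v (G t) = 0 := abs_eq_zero.mp (le_antisymm h0 (abs_nonneg _))
        rw [h0', hz]
        simp
      · have hzpos : 0 < ‖G s - G t‖ := lt_of_le_of_ne (norm_nonneg _) (Ne.symm hz)
        rw [div_le_iff₀ (by positivity)]
        have := halip s hs t ht
        nlinarith [sq_abs (v (G s) - v (G t)), abs_nonneg (v (G s) - v (G t)),
          NNReal.coe_nonneg K, norm_nonneg (G s - G t)]
    have hq0 : 0 ≤ (v (G s) - v (G t)) ^ 2 / ‖G s - G t‖ ^ 2 := by positivity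
    have hDsb := hG' s hs
    have hDtb := hG' t ht
    rw [Real.norm_eq_abs, abs_of_nonneg (by positivity)]
    exact mul_le_mul hq (mul_le_mul hDsb hDtb (norm_nonneg _) (by positivity))
      (mul_nonneg (norm_nonneg _) (norm_nonneg _)) (by positivity)
  -- slice integrability of the f1 integrand
  have hf1int : ∀ s ∈ Set.Icc (0:ℝ) 1, Integrable
      (fun t => (v (G s) - v (G t)) ^ 2 / ‖G s - G t‖ ^ 2 *
        (‖deriv G s‖ * ‖deriv G t‖)) μ := by
    intro s hs
    have h1 : AEMeasurable (fun t => (v (G s) - v (G t))^2) μ :=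
      (aemeasurable_const.sub hmA.aemeasurable).pow_const 2
    have h2 : AEMeasurable (fun t => ‖G s - G t‖^2) μ :=
      ((continuousOn_const.sub (hGC.mono hIocIcc)).norm.pow 2).aemeasurable measurableSet_Ioc
    have ham : AEStronglyMeasurable (fun t => (v (G s) - v (G t)) ^ 2 / ‖G s - G t‖ ^ 2 *
        (‖deriv G s‖ * ‖deriv G t‖)) μ :=
      ((h1.div h2).mul (aemeasurable_const.mul hmD.aemeasurable)).aestronglyMeasurable
    refine (integrable_const ((K:ℝ)^2 * ((C*H)*(C*H)))).mono' ham ?_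
    filter_upwards [ae_restrict_mem measurableSet_Ioc] with t ht
    exact hbnd s hs t (hIocIcc ht)
  -- joint integrability on the product
  have hprodmeas : μ.prod μ
      = (volume.prod volume).restrict ((Set.Ioc (0:ℝ) 1) ×ˢ (Set.Ioc (0:ℝ) 1)) := by
    rw [hμ]; exact Measure.prod_restrict _ _
  have hset : MeasurableSet ((Set.Ioc (0:ℝ) 1) ×ˢ (Set.Ioc (0:ℝ) 1)) :=
    measurableSet_Ioc.prod measurableSet_Ioc
  have hPint : Integrable (fun p : ℝ × ℝ => (v (G p.1) - v (G p.2)) ^ 2 / ‖G p.1 - G p.2‖ ^ 2 *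
      (‖deriv G p.1‖ * ‖deriv G p.2‖)) (μ.prod μ) := by
    rw [hprodmeas]
    have hfst : ContinuousOn (fun p : ℝ × ℝ => v (G p.1))
        ((Set.Ioc (0:ℝ) 1) ×ˢ (Set.Ioc (0:ℝ) 1)) :=
      (haC.mono hIocIcc).comp continuous_fst.continuousOn (fun p hp => hp.1)
    have hsnd : ContinuousOn (fun p : ℝ × ℝ => v (G p.2))
        ((Set.Ioc (0:ℝ) 1) ×ˢ (Set.Ioc (0:ℝ) 1)) :=
      (haC.mono hIocIcc).comp continuous_snd.continuousOn (fun p hp => hp.2)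
    have hGfst : ContinuousOn (fun p : ℝ × ℝ => G p.1)
        ((Set.Ioc (0:ℝ) 1) ×ˢ (Set.Ioc (0:ℝ) 1)) :=
      (hGC.mono hIocIcc).comp continuous_fst.continuousOn (fun p hp => hp.1)
    have hGsnd : ContinuousOn (fun p : ℝ × ℝ => G p.2)
        ((Set.Ioc (0:ℝ) 1) ×ˢ (Set.Ioc (0:ℝ) 1)) :=
      (hGC.mono hIocIcc).comp continuous_snd.continuousOn (fun p hp => hp.2)
    have h1 : AEMeasurable (fun p : ℝ × ℝ => (v (G p.1) - v (G p.2))^2)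
        ((volume.prod volume).restrict ((Set.Ioc (0:ℝ) 1) ×ˢ (Set.Ioc (0:ℝ) 1))) :=
      ((hfst.sub hsnd).pow 2).aemeasurable hset
    have h2 : AEMeasurable (fun p : ℝ × ℝ => ‖G p.1 - G p.2‖^2)
        ((volume.prod volume).restrict ((Set.Ioc (0:ℝ) 1) ×ˢ (Set.Ioc (0:ℝ) 1))) :=
      (((hGfst.sub hGsnd).norm).pow 2).aemeasurable hset
    have h3 : Measurable (fun p : ℝ × ℝ => ‖deriv G p.1‖ * ‖deriv G p.2‖) :=
      (hmD.comp measurable_fst).mul (hmD.comp measurable_snd)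
    have ham : AEStronglyMeasurable (fun p : ℝ × ℝ =>
        (v (G p.1) - v (G p.2)) ^ 2 / ‖G p.1 - G p.2‖ ^ 2 *
          (‖deriv G p.1‖ * ‖deriv G p.2‖))
        ((volume.prod volume).restrict ((Set.Ioc (0:ℝ) 1) ×ˢ (Set.Ioc (0:ℝ) 1))) :=
      ((h1.div h2).mul h3.aemeasurable).aestronglyMeasurable
    haveI : IsFiniteMeasure
        ((volume.prod volume).restrict ((Set.Ioc (0:ℝ) 1) ×ˢ (Set.Ioc (0:ℝ) 1))) := by
      rw [← Measure.prod_restrict, ← hμ]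
      infer_instance
    refine (integrable_const ((K:ℝ)^2 * ((C*H)*(C*H)))).mono' ham ?_
    filter_upwards [ae_restrict_mem hset] with p hp
    exact hbnd p.1 (hIocIcc hp.1) p.2 (hIocIcc hp.2)
  have hIntOuter : Integrable (fun s => ∫ t in (0:ℝ)..1,
      (v (G s) - v (G t)) ^ 2 / ‖G s - G t‖ ^ 2 * (‖deriv G s‖ * ‖deriv G t‖)) μ := by
    have h := hPint.integral_prod_left
    refine h.congr (Filter.Eventually.of_forall fun s => ?_)
    simp only [intervalIntegral.integral_of_le h01, hμ]
  have hIntA2 : Integrable (fun s => (v (G s))^2) μ := by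
    have ham : AEStronglyMeasurable (fun s => (v (G s))^2) μ :=
      ((haC.mono hIocIcc).pow 2).aestronglyMeasurable measurableSet_Ioc
    refine (integrable_const (M^2)).mono' ham ?_
    filter_upwards [ae_restrict_mem measurableSet_Ioc] with t ht
    have := hM t (hIocIcc ht)
    rw [Real.norm_eq_abs] at this ⊢
    rw [abs_of_nonneg (sq_nonneg _)]
    nlinarith [abs_nonneg (v (G t)), sq_abs (v (G t))]
  have hIntf2 : Integrable (fun t => (v (G t))^2 * ‖deriv G t‖) μ := by
    have ham : AEStronglyMeasurable (fun t => (v (G t))^2 * ‖deriv G t‖) μ :=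
      ((((haC.mono hIocIcc).pow 2).aemeasurable measurableSet_Ioc).mul
        hmD.aemeasurable).aestronglyMeasurable
    refine (integrable_const (M^2 * (C*H))).mono' ham ?_
    filter_upwards [ae_restrict_mem measurableSet_Ioc] with t ht
    have h1 := hM t (hIocIcc ht)
    have h2 := hG' t (hIocIcc ht)
    rw [Real.norm_eq_abs] at h1
    rw [Real.norm_eq_abs, abs_of_nonneg (by positivity)]
    have hsq : (v (G t))^2 ≤ M^2 := by
      nlinarith [abs_nonneg (v (G t)), sq_abs (v (G t))]
    exact mul_le_mul hsq h2 (norm_nonneg _) (by nlinarith [abs_nonneg (v (G t)), sq_abs (v (G t))])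
  -- inner inequality
  have hinner : ∀ s ∈ Set.Ioo (0:ℝ) 1,
      (∫ t in (0:ℝ)..1, (v (G s) * w s - v (G t) * w t) ^ 2 / (s - t) ^ 2) ≤
        2*C^2*H^2*(v (G s))^2 + κ*H^2*(∫ t in (0:ℝ)..1,
          (v (G s) - v (G t)) ^ 2 / ‖G s - G t‖ ^ 2 * (‖deriv G s‖ * ‖deriv G t‖)) := by
    intro s hs
    have hint : Integrable (fun t => 2*C^2*H^2*(v (G s))^2 +
        κ*H^2*((v (G s) - v (G t)) ^ 2 / ‖G s - G t‖ ^ 2 *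
          (‖deriv G s‖ * ‖deriv G t‖))) μ :=
      (integrable_const _).add ((hf1int s (hIooIcc hs)).const_mul _)
    have h1 : (∫ t in (0:ℝ)..1, (v (G s) * w s - v (G t) * w t) ^ 2 / (s - t) ^ 2) ≤
        ∫ t in (0:ℝ)..1, (2*C^2*H^2*(v (G s))^2 +
          κ*H^2*((v (G s) - v (G t)) ^ 2 / ‖G s - G t‖ ^ 2 *
            (‖deriv G s‖ * ‖deriv G t‖))) := by
      rw [intervalIntegral.integral_of_le h01, intervalIntegral.integral_of_le h01, ← hμ]
      refine integral_mono_of_nonneg ?_ hint ?_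
      · exact Filter.Eventually.of_forall fun t => by positivity
      · filter_upwards [hae_Ioo] with t ht
        exact hkey s hs t ht
    have h2 : (∫ t in (0:ℝ)..1, (2*C^2*H^2*(v (G s))^2 +
        κ*H^2*((v (G s) - v (G t)) ^ 2 / ‖G s - G t‖ ^ 2 *
          (‖deriv G s‖ * ‖deriv G t‖)))) =
        2*C^2*H^2*(v (G s))^2 + κ*H^2*(∫ t in (0:ℝ)..1,
          (v (G s) - v (G t)) ^ 2 / ‖G s - G t‖ ^ 2 * (‖deriv G s‖ * ‖deriv G t‖)) := by
      rw [intervalIntegral.integral_add (intervalIntegrable_const)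
        (((intervalIntegrable_iff_integrableOn_Ioc_of_le h01).mpr
          ((hf1int s (hIooIcc hs)).const_mul _)))]
      rw [intervalIntegral.integral_const, intervalIntegral.integral_const_mul]
      simp
    linarith [h1, h2.le, h2.ge]
  -- outer inequality
  have houter : (∫ s in (0:ℝ)..1, ∫ t in (0:ℝ)..1,
      (v (G s) * w s - v (G t) * w t) ^ 2 / (s - t) ^ 2) ≤
      ∫ s in (0:ℝ)..1, (2*C^2*H^2*(v (G s))^2 + κ*H^2*(∫ t in (0:ℝ)..1,
        (v (G s) - v (G t)) ^ 2 / ‖G s - G t‖ ^ 2 * (‖deriv G s‖ * ‖deriv G t‖))) := by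
    rw [intervalIntegral.integral_of_le h01, intervalIntegral.integral_of_le h01, ← hμ]
    refine integral_mono_of_nonneg ?_ ?_ ?_
    · exact Filter.Eventually.of_forall fun s =>
        intervalIntegral.integral_nonneg h01 fun t _ => by positivity
    · exact (hIntA2.const_mul _).add (hIntOuter.const_mul _)
    · filter_upwards [hae_Ioo] with s hs
      exact hinner s hs
  have hsplit : (∫ s in (0:ℝ)..1, (2*C^2*H^2*(v (G s))^2 + κ*H^2*(∫ t in (0:ℝ)..1,
      (v (G s) - v (G t)) ^ 2 / ‖G s - G t‖ ^ 2 * (‖deriv G s‖ * ‖deriv G t‖)))) =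
      2*C^2*H^2*(∫ s in (0:ℝ)..1, (v (G s))^2) +
        κ*H^2*(∫ s in (0:ℝ)..1, ∫ t in (0:ℝ)..1,
          (v (G s) - v (G t)) ^ 2 / ‖G s - G t‖ ^ 2 * (‖deriv G s‖ * ‖deriv G t‖)) := by
    rw [intervalIntegral.integral_add
      ((intervalIntegrable_iff_integrableOn_Ioc_of_le h01).mpr (hIntA2.const_mul _))
      ((intervalIntegrable_iff_integrableOn_Ioc_of_le h01).mpr (hIntOuter.const_mul _)),
      intervalIntegral.integral_const_mul, intervalIntegral.integral_const_mul]
  have hJ1nonneg : 0 ≤ ∫ s in (0:ℝ)..1, ∫ t in (0:ℝ)..1,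
      (v (G s) - v (G t)) ^ 2 / ‖G s - G t‖ ^ 2 * (‖deriv G s‖ * ‖deriv G t‖) :=
    intervalIntegral.integral_nonneg h01 fun s _ =>
      intervalIntegral.integral_nonneg h01 fun t _ => by positivity
  have hJ2nonneg : 0 ≤ ∫ t in (0:ℝ)..1, (v (G t))^2 * ‖deriv G t‖ :=
    intervalIntegral.integral_nonneg h01 fun t _ => by positivity
  have hIAnn : 0 ≤ ∫ s in (0:ℝ)..1, (v (G s))^2 :=
    intervalIntegral.integral_nonneg h01 fun s _ => by positivity
  have hCineq : c*H*(∫ s in (0:ℝ)..1, (v (G s))^2) ≤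
      ∫ t in (0:ℝ)..1, (v (G t))^2 * ‖deriv G t‖ := by
    have h : (∫ s in (0:ℝ)..1, c*H*(v (G s))^2) ≤
        ∫ t in (0:ℝ)..1, (v (G t))^2 * ‖deriv G t‖ := by
      rw [intervalIntegral.integral_of_le h01, intervalIntegral.integral_of_le h01, ← hμ]
      refine integral_mono_of_nonneg ?_ hIntf2 ?_
      · exact Filter.Eventually.of_forall fun t => by positivity
      · filter_upwards [hae_Ioo] with t ht
        have := hderiv_lb t ht
        nlinarith [sq_nonneg (v (G t))]
    rwa [intervalIntegral.integral_const_mul] at h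
  refine le_trans houter ?_
  rw [hsplit]
  exact final16 C c H κ _ _ _ hC hc hH hκ hJ1nonneg hJ2nonneg hIAnn hCineq
end
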